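/- Let G be a finite set of monomials with a linear order and let A be the Barile-Macchia matching (the possible edges after Step (3) retains at most one edge per target). Then the reversed-edge graph G_I^A is acyclic: any directed cycle in G_I^A would have to alternate between reversed matching edges (which increase cardinality by 1) and ordinary edges (which decrease cardinality by 1), and no such cycle exists because along any such alternating closed walk the lcm is constant while the sequence of added/removed smallest bridges strictly decreases in the linear order. -/

import Mathlib

/-- Monomials in `N` variables, modeled as exponent vectors. -/
abbrev Mon (N : ℕ) := Fin N → ℕ

/-- lcm of a finite set of monomials: the pointwise supremum. -/
def mLcm {N : ℕ} (σ : Finset (Mon N)) : Mon N := fun i => σ.sup (fun m => m i)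

/-- `m` divides `m'`: pointwise ≤ of exponent vectors. -/
def mDvd {N : ℕ} (m m' : Mon N) : Prop := ∀ i, m i ≤ m' i

/-- `m` is a bridge of `σ`: `m ∈ σ` and removing `m` does not change the lcm. -/
def IsBridge {N : ℕ} (σ : Finset (Mon N)) (m : Mon N) : Prop :=
  m ∈ σ ∧ mLcm (σ.erase m) = mLcm σ

/-- `σ` has a bridge. -/
def HasBridge {N : ℕ} (σ : Finset (Mon N)) : Prop := ∃ m, IsBridge σ m

/-!
Every edge of `G_I^A` either strictly lowers the lcm or keeps it and strictly lowers a
numerical potential, so there is no closed walk. Weight each monomial of `G` by its rank in `L`.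
A vertex `v` that is the source of a matching edge gets potential `2·wt (v \ sbridge v)`, every
other vertex `2·wt v + 1`. A reversed matching edge `τ → τ ∪ {sbridge}` lowers the potential by
one, because a target of the matching is never a source: for matching edges `ρ → σ → τ`, the set
`τ ∪ {sbridge ρ}` would compete with `σ` for `τ` with a smaller smallest bridge. An unmatched down
edge `v → v \ m` that keeps the lcm removes a bridge `m`, which for a source `v` is `L`-larger
than `sbridge v`, so it removes more weight than the matching edge would.
-/

namespace BarileMacchia

variable {N : ℕ}

open Finset

theorem mLcm_eq_sup (σ : Finset (Mon N)) : mLcm σ = σ.sup id := by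
  funext i
  rw [Finset.sup_apply]
  rfl

theorem isBridge_iff {σ : Finset (Mon N)} {m : Mon N} :
    IsBridge σ m ↔ m ∈ σ ∧ (σ.erase m).sup id = σ.sup id := by
  simp only [IsBridge, mLcm_eq_sup]

theorem isBridge_insert_self {τ : Finset (Mon N)} {a : Mon N} (ha : a ∉ τ)
    (hle : a ≤ τ.sup id) : IsBridge (insert a τ) a := by
  rw [isBridge_iff, erase_insert ha, sup_insert, id, sup_eq_right.2 hle]
  exact ⟨mem_insert_self a τ, rfl⟩

theorem IsBridge.insert {σ : Finset (Mon N)} {m : Mon N} (h : IsBridge σ m) (a : Mon N)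
    (hma : m ≠ a) : IsBridge (insert a σ) m := by
  rw [isBridge_iff] at h ⊢
  rw [erase_insert_of_ne hma.symm, sup_insert, sup_insert, h.2]
  exact ⟨mem_insert_of_mem h.1, rfl⟩

def IsLeastBridgeChoice (L : LinearOrder (Mon N)) (sb : Finset (Mon N) → Mon N) : Prop :=
  ∀ σ : Finset (Mon N), HasBridge σ → IsBridge σ (sb σ) ∧ ∀ m, IsBridge σ m → L.le (sb σ) m

def IsBMMatching (G : Finset (Mon N)) (L : LinearOrder (Mon N)) (sb : Finset (Mon N) → Mon N)
    (A : Set (Finset (Mon N) × Finset (Mon N))) : Prop :=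
  ∀ e : Finset (Mon N) × Finset (Mon N),
    e ∈ A ↔ e.1 ⊆ G ∧ HasBridge e.1 ∧ e.2 = e.1.erase (sb e.1) ∧
      ∀ σ' : Finset (Mon N), σ' ⊆ G → HasBridge σ' →
        σ'.erase (sb σ') = e.2 → L.le (sb e.1) (sb σ')

section Matching

variable {G : Finset (Mon N)} {L : LinearOrder (Mon N)} {sb : Finset (Mon N) → Mon N}
  {A : Set (Finset (Mon N) × Finset (Mon N))}

theorem IsBMMatching.eq_insert (hsb : IsLeastBridgeChoice L sb) (hA : IsBMMatching G L sb A)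
    {σ τ : Finset (Mon N)} (h : (σ, τ) ∈ A) :
    σ ⊆ G ∧ IsBridge σ (sb σ) ∧ sb σ ∉ τ ∧ insert (sb σ) τ = σ ∧ τ.sup id = σ.sup id := by
  obtain ⟨hσG, hσB, hτ, -⟩ := (hA _).1 h
  dsimp only at hτ
  subst hτ
  obtain ⟨hmem, hsup⟩ := isBridge_iff.1 (hsb σ hσB).1
  exact ⟨hσG, (hsb σ hσB).1, notMem_erase _ _, insert_erase hmem, hsup⟩

theorem IsBMMatching.notMem_of_mem (hsb : IsLeastBridgeChoice L sb) (hA : IsBMMatching G L sb A)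
    {ρ σ τ : Finset (Mon N)} (hρσ : (ρ, σ) ∈ A) : (σ, τ) ∉ A := by
  intro hστ
  obtain ⟨hρG, hbρ, hbσ, hρ, hsupσ⟩ := hA.eq_insert hsb hρσ
  obtain ⟨-, hsσ, hsτ, hσ, hsupτ⟩ := hA.eq_insert hsb hστ
  obtain ⟨-, -, -, hτmin⟩ := (hA _).1 hστ
  set b := sb ρ
  set s := sb σ
  have hρ_ins : insert s (insert b τ) = ρ := by rw [Finset.insert_comm, hσ, hρ]
  have hs_ne_b : s ≠ b := fun h => hbσ (h ▸ (isBridge_iff.1 hsσ).1)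
  have hb_le_s : L.le b s := (hsb ρ ⟨b, hbρ⟩).2 s (hρ ▸ IsBridge.insert hsσ b hs_ne_b)
  have hbτ : b ∉ τ := fun h => hbσ (hσ ▸ mem_insert_of_mem h)
  have hbρ' : IsBridge (insert b τ) b := by
    refine isBridge_insert_self hbτ ?_
    rw [hsupτ, hsupσ]
    exact le_sup (f := id) (isBridge_iff.1 hbρ).1
  have hρ'G : insert b τ ⊆ G := (subset_insert s _).trans (hρ_ins ▸ hρG)
  obtain ⟨hm'ρ', hm'le⟩ := hsb _ ⟨b, hbρ'⟩
  -- any other least bridge of `insert b τ` would be a bridge of `ρ` lying `L`-below `b`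
  have hm' : sb (insert b τ) = b := by
    by_contra hne
    have hm'τ : sb (insert b τ) ∈ τ := (mem_insert.1 (isBridge_iff.1 hm'ρ').1).resolve_left hne
    have hm'ρ : IsBridge ρ (sb (insert b τ)) :=
      hρ_ins ▸ IsBridge.insert hm'ρ' s (fun h => hsτ (h ▸ hm'τ))
    exact hne (L.le_antisymm _ _ (hm'le b hbρ') ((hsb ρ ⟨b, hbρ⟩).2 _ hm'ρ))
  have hs_le_b := hτmin (insert b τ) hρ'G ⟨b, hbρ'⟩ (by rw [hm', erase_insert hbτ])
  rw [hm'] at hs_le_b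
  exact hs_ne_b (L.le_antisymm _ _ hs_le_b hb_le_s)

variable (G L sb A)

open Classical in
noncomputable def rank (a : Mon N) : ℕ := #{b ∈ G | L.le b a}

noncomputable def weight (v : Finset (Mon N)) : ℕ := ∑ a ∈ v, rank G L a

open Classical in
noncomputable def potential (v : Finset (Mon N)) : ℕ :=
  if (v, v.erase (sb v)) ∈ A then 2 * weight G L (v.erase (sb v)) else 2 * weight G L v + 1

variable {G L sb A}

theorem rank_pos {a : Mon N} (ha : a ∈ G) : 0 < rank G L a :=
  card_pos.2 ⟨a, mem_filter.2 ⟨ha, L.le_refl a⟩⟩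

theorem rank_lt_rank {a b : Mon N} (hb : b ∈ G) (hab : L.le a b) (hne : a ≠ b) :
    rank G L a < rank G L b := by
  classical
  refine card_lt_card ⟨monotone_filter_right G fun c _ hca => L.le_trans c a b hca hab, fun h => ?_⟩
  exact hne (L.le_antisymm a b hab (mem_filter.1 (h (mem_filter.2 ⟨hb, L.le_refl b⟩))).2)

theorem weight_erase_add {v : Finset (Mon N)} {a : Mon N} (ha : a ∈ v) :
    weight G L (v.erase a) + rank G L a = weight G L v :=
  sum_erase_add v _ ha

theorem potential_eq_of_mem {v : Finset (Mon N)} (h : (v, v.erase (sb v)) ∈ A) :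
    potential G L sb A v = 2 * weight G L (v.erase (sb v)) :=
  if_pos h

theorem potential_eq_of_notMem {v : Finset (Mon N)} (h : (v, v.erase (sb v)) ∉ A) :
    potential G L sb A v = 2 * weight G L v + 1 :=
  if_neg h

theorem potential_le (v : Finset (Mon N)) : potential G L sb A v ≤ 2 * weight G L v + 1 := by
  unfold potential
  split_ifs
  · have := sum_le_sum_of_subset (f := rank G L) (erase_subset (sb v) v)
    unfold weight
    omega
  · exact le_rfl

theorem potential_lt_of_mem (hsb : IsLeastBridgeChoice L sb) (hA : IsBMMatching G L sb A)
    {σ τ : Finset (Mon N)} (h : (σ, τ) ∈ A) : potential G L sb A σ < potential G L sb A τ := by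
  have hτ : τ = σ.erase (sb σ) := ((hA _).1 h).2.2.1
  have hσ : (σ, σ.erase (sb σ)) ∈ A := hτ ▸ h
  have hτ' : (τ, τ.erase (sb τ)) ∉ A := hA.notMem_of_mem hsb h
  rw [potential_eq_of_mem hσ, potential_eq_of_notMem hτ', ← hτ]
  omega

theorem potential_erase_lt (hsb : IsLeastBridgeChoice L sb) (hA : IsBMMatching G L sb A)
    {x : Finset (Mon N)} {m : Mon N} (hxG : x ⊆ G) (hm : IsBridge x m) (hnA : (x, x.erase m) ∉ A) :
    potential G L sb A (x.erase m) < potential G L sb A x := by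
  have hle := potential_le (G := G) (L := L) (sb := sb) (A := A) (x.erase m)
  have hwm := weight_erase_add (G := G) (L := L) (isBridge_iff.1 hm).1
  by_cases hx : (x, x.erase (sb x)) ∈ A
  · obtain ⟨-, hb, -⟩ := hA.eq_insert hsb hx
    have hbm : sb x ≠ m := fun h => hnA (h ▸ hx)
    have hrank := rank_lt_rank (hxG (isBridge_iff.1 hm).1) ((hsb x ⟨m, hm⟩).2 m hm) hbm
    have hwb := weight_erase_add (G := G) (L := L) (isBridge_iff.1 hb).1
    rw [potential_eq_of_mem hx]
    omega
  · have := rank_pos (L := L) (hxG (isBridge_iff.1 hm).1)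
    rw [potential_eq_of_notMem hx]
    omega

variable (G A) in
/-- The edge relation of `G_I^A`. -/
def ReversedAdj (τ τ' : Finset (Mon N)) : Prop :=
  (τ ⊆ G ∧ τ' ⊆ τ ∧ τ'.card + 1 = τ.card ∧ (τ, τ') ∉ A) ∨ (τ', τ) ∈ A

theorem ReversedAdj.toLex_lt (hsb : IsLeastBridgeChoice L sb) (hA : IsBMMatching G L sb A)
    {x y : Finset (Mon N)} (h : ReversedAdj G A x y) :
    toLex (y.sup id, potential G L sb A y) < toLex (x.sup id, potential G L sb A x) := by
  rw [Prod.Lex.toLex_lt_toLex]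
  dsimp only
  rcases h with ⟨hxG, hyx, hcard, hnA⟩ | hyx
  · obtain ⟨m, hmy, rfl⟩ := exists_eq_insert_iff.2 ⟨hyx, hcard⟩
    refine (sup_mono (f := id) (subset_insert m y)).lt_or_eq.imp id fun hsup => ⟨hsup, ?_⟩
    have hm : IsBridge (insert m y) m :=
      isBridge_iff.2 ⟨mem_insert_self m y, by rw [erase_insert hmy, hsup]⟩
    simpa only [erase_insert hmy] using potential_erase_lt hsb hA hxG hm (by rwa [erase_insert hmy])
  · obtain ⟨-, -, -, -, hsup⟩ := hA.eq_insert hsb hyx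
    exact Or.inr ⟨hsup.symm, potential_lt_of_mem hsb hA hyx⟩

end Matching

end BarileMacchia

open BarileMacchia in
/-- Acyclicity of the Barile–Macchia matching (Theorem 2.11 of Chau–Kara):
let `sb` pick the least bridge with respect to a linear order `L`, and let `A`
be the Barile–Macchia matching, i.e. the set of possible edges
`(σ, σ \ sbridge σ)` retained by Step (3): for each target exactly the edge
whose smallest bridge is `L`-least.  Then the reversed-edge graph `G_I^A`
is acyclic: it has no nonempty directed closed walk. -/
theorem bm_matching_acyclic {N : ℕ} (G : Finset (Mon N))
    (L : LinearOrder (Mon N)) (sb : Finset (Mon N) → Mon N)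
    (hsb : ∀ σ : Finset (Mon N), HasBridge σ →
      IsBridge σ (sb σ) ∧ ∀ m, IsBridge σ m → L.le (sb σ) m)
    (A : Set (Finset (Mon N) × Finset (Mon N)))
    (hA : ∀ e : Finset (Mon N) × Finset (Mon N),
      e ∈ A ↔ e.1 ⊆ G ∧ HasBridge e.1 ∧ e.2 = e.1.erase (sb e.1) ∧
        ∀ σ' : Finset (Mon N), σ' ⊆ G → HasBridge σ' →
          σ'.erase (sb σ') = e.2 → L.le (sb e.1) (sb σ')) :
    ∀ σ : Finset (Mon N), ¬ Relation.TransGen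
      (fun τ τ' : Finset (Mon N) =>
        (τ ⊆ G ∧ τ' ⊆ τ ∧ τ'.card + 1 = τ.card ∧ (τ, τ') ∉ A) ∨ (τ', τ) ∈ A)
      σ σ := by
  intro σ hσ
  set Φ := fun v : Finset (Mon N) => toLex (v.sup id, potential G L sb A v)
  have hcyc : Relation.TransGen (· > ·) (Φ σ) (Φ σ) :=
    Relation.TransGen.lift (r := ReversedAdj G A) (p := (· > ·)) Φ
      (fun _ _ h => ReversedAdj.toLex_lt hsb hA h) σ σ hσ
  rw [Relation.transGen_eq_self] at hcyc
  exact lt_irrefl _ hcyc
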